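/- Let s : [0,∞) → ℝ be differentiable and satisfy ṡ(t) = -Kψ₁·sign(s(t)) + ψ₁·d(t) + R(t) whenever s(t) ≠ 0, where ψ₁ > 0 is a constant, |d(t)| ≤ d_max, |R(t)| ≤ R_max for all t, and K > (ψ₁·d_max + R_max)/ψ₁. Then with η := Kψ₁ - (ψ₁ d_max + R_max) > 0 one has d/dt|s(t)| ≤ -η whenever s(t) ≠ 0, and consequently s(t) = 0 for all t ≥ |s(0)|/η. -/
import Mathlib


open Real Set

/-- Mean-value helper: if `s' ≤ -η` wherever `s > 0`, then the positive part of `s`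
decreases; an interval where `s` stays positive forces a linear decay. -/
private lemma sm_antitone (s s' : ℝ → ℝ) (η : ℝ)
    (hderiv : ∀ t ∈ Ici (0 : ℝ), HasDerivAt s (s' t) t)
    (hup : ∀ t ∈ Ici (0 : ℝ), 0 < s t → s' t ≤ -η)
    (a b : ℝ) (ha : 0 ≤ a) (hab : a ≤ b)
    (hpos : ∀ τ ∈ Ioo a b, 0 < s τ) :
    AntitoneOn (fun t => s t + η * t) (Icc a b) := by
  apply antitoneOn_of_deriv_nonpos (convex_Icc a b)
  · intro τ hτ
    exact ((hderiv τ (ha.trans hτ.1)).add ((hasDerivAt_id τ).const_mul η)).continuousAt.continuousWithinAt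
  · intro τ hτ
    rw [interior_Icc] at hτ
    exact ((hderiv τ (ha.trans hτ.1.le)).add
      ((hasDerivAt_id τ).const_mul η)).differentiableAt.differentiableWithinAt
  · intro τ hτ
    rw [interior_Icc] at hτ
    have hτ0 : (0:ℝ) ≤ τ := ha.trans hτ.1.le
    have h1 : HasDerivAt (fun t => s t + η * t) (s' τ + η * 1) τ :=
      (hderiv τ hτ0).add ((hasDerivAt_id τ).const_mul η)
    rw [h1.deriv]
    have := hup τ hτ0 (hpos τ hτ)
    linarith

/-- If `s' ≤ -η < 0` wherever `s > 0` (for `t ≥ 0`), then once `s` vanishes it can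
never become positive again. -/
private lemma sm_no_return (s s' : ℝ → ℝ) (η : ℝ) (hη : 0 < η)
    (hderiv : ∀ t ∈ Ici (0 : ℝ), HasDerivAt s (s' t) t)
    (hup : ∀ t ∈ Ici (0 : ℝ), 0 < s t → s' t ≤ -η)
    (t₀ t₁ : ℝ) (ht₀ : 0 ≤ t₀) (hz : s t₀ = 0) (hlt : t₀ < t₁) :
    ¬ 0 < s t₁ := by
  intro hpos
  set A : Set ℝ := {t | t ∈ Icc t₀ t₁ ∧ s t = 0} with hA
  have hne : A.Nonempty := ⟨t₀, ⟨le_refl _, hlt.le⟩, hz⟩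
  have hbdd : BddAbove A := ⟨t₁, fun x hx => hx.1.2⟩
  set t₂ := sSup A with ht₂
  have ht₂mem : t₂ ∈ Icc t₀ t₁ :=
    ⟨le_csSup hbdd ⟨⟨le_refl _, hlt.le⟩, hz⟩, csSup_le hne fun x hx => hx.1.2⟩
  have hcontAt : ∀ τ ∈ Icc t₀ t₁, ContinuousAt s τ := fun τ hτ =>
    (hderiv τ (ht₀.trans hτ.1)).continuousAt
  have hst₂ : s t₂ = 0 := by
    obtain ⟨u, -, hulim, humem⟩ := exists_seq_tendsto_sSup hne hbdd
    have h1 : Filter.Tendsto (fun n => s (u n)) Filter.atTop (nhds (s t₂)) :=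
      ((hcontAt t₂ ht₂mem).tendsto).comp hulim
    have h2 : (fun n => s (u n)) = fun _ => (0:ℝ) := funext fun n => (humem n).2
    rw [h2] at h1
    exact tendsto_nhds_unique h1 tendsto_const_nhds
  have ht₂lt : t₂ < t₁ := lt_of_le_of_ne ht₂mem.2 fun he => hpos.ne' (he ▸ hst₂)
  have hne0 : ∀ τ ∈ Ioc t₂ t₁, s τ ≠ 0 := by
    intro τ hτ h0
    have : τ ∈ A := ⟨⟨ht₂mem.1.trans hτ.1.le, hτ.2⟩, h0⟩
    exact absurd (le_csSup hbdd this) (not_le.mpr hτ.1)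
  have hspos : ∀ τ ∈ Ioc t₂ t₁, 0 < s τ := by
    intro τ hτ
    rcases (hne0 τ hτ).lt_or_gt with hneg | hp
    · exfalso
      have hct : ContinuousOn s (Icc τ t₁) := fun σ hσ =>
        (hcontAt σ ⟨(ht₂mem.1.trans hτ.1.le).trans hσ.1, hσ.2⟩).continuousWithinAt
      obtain ⟨σ, hσ, h0⟩ := intermediate_value_Icc hτ.2 hct ⟨hneg.le, hpos.le⟩
      exact hne0 σ ⟨hτ.1.trans_le hσ.1, hσ.2⟩ h0
    · exact hp
  have hanti := sm_antitone s s' η hderiv hup t₂ t₁ (ht₀.trans ht₂mem.1) ht₂lt.le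
    (fun τ hτ => hspos τ ⟨hτ.1, hτ.2.le⟩)
  have hle := hanti ⟨le_refl _, ht₂lt.le⟩ ⟨ht₂lt.le, le_refl _⟩ ht₂lt.le
  simp only at hle
  rw [hst₂] at hle
  nlinarith

/-- If `s' ≤ -η < 0` wherever `s > 0` and `s t₀ > 0`, `s` reaches zero within
time `s t₀ / η`. -/
private lemma sm_reach (s s' : ℝ → ℝ) (η : ℝ) (hη : 0 < η)
    (hderiv : ∀ t ∈ Ici (0 : ℝ), HasDerivAt s (s' t) t)
    (hup : ∀ t ∈ Ici (0 : ℝ), 0 < s t → s' t ≤ -η)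
    (t₀ : ℝ) (ht₀ : 0 ≤ t₀) (hpos : 0 < s t₀) :
    ∃ t ∈ Icc t₀ (t₀ + s t₀ / η), s t = 0 := by
  by_contra h
  push_neg at h
  set T := t₀ + s t₀ / η with hT
  have hT0 : t₀ ≤ T := le_add_of_nonneg_right (div_nonneg hpos.le hη.le)
  have hcontAt : ∀ τ ∈ Icc t₀ T, ContinuousAt s τ := fun τ hτ =>
    (hderiv τ (ht₀.trans hτ.1)).continuousAt
  have hspos : ∀ τ ∈ Icc t₀ T, 0 < s τ := by
    intro τ hτ
    rcases (h τ hτ).lt_or_gt with hneg | hp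
    · exfalso
      have hct : ContinuousOn s (Icc t₀ τ) := fun σ hσ =>
        (hcontAt σ ⟨hσ.1, hσ.2.trans hτ.2⟩).continuousWithinAt
      obtain ⟨σ, hσ, h0⟩ := intermediate_value_Icc' hτ.1 hct ⟨hneg.le, hpos.le⟩
      exact h σ ⟨hσ.1, hσ.2.trans hτ.2⟩ h0
    · exact hp
  have hanti := sm_antitone s s' η hderiv hup t₀ T ht₀ hT0
    (fun τ hτ => hspos τ ⟨hτ.1.le, hτ.2.le⟩)
  have hle := hanti ⟨le_refl _, hT0⟩ ⟨hT0, le_refl _⟩ hT0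
  simp only at hle
  have hTeq : η * (T - t₀) = s t₀ := by
    rw [hT]
    field_simp
    ring
  have hsT : 0 < s T := hspos T ⟨hT0, le_refl _⟩
  nlinarith

/-- Reaching-phase estimate: if `ṡ(t) = -Kψ₁ sign(s(t)) + ψ₁ d(t) + R(t)` whenever
`s(t) ≠ 0`, with `ψ₁ > 0`, `|d| ≤ d_max`, `|R| ≤ R_max` and
`K > (ψ₁ d_max + R_max)/ψ₁`, then with `η = Kψ₁ - (ψ₁ d_max + R_max) > 0` the derivative
of `|s|` is `≤ -η` off the sliding manifold, and `s(t) = 0` for all `t ≥ |s(0)|/η`. -/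
theorem stmt_4 (s s' d R : ℝ → ℝ) (K ψ₁ dmax Rmax : ℝ)
    (hψ₁ : 0 < ψ₁)
    (hderiv : ∀ t ∈ Ici (0 : ℝ), HasDerivAt s (s' t) t)
    (heq : ∀ t ∈ Ici (0 : ℝ), s t ≠ 0 →
      s' t = -K * ψ₁ * Real.sign (s t) + ψ₁ * d t + R t)
    (hd : ∀ t, |d t| ≤ dmax) (hR : ∀ t, |R t| ≤ Rmax)
    (hK : K > (ψ₁ * dmax + Rmax) / ψ₁)
    (η : ℝ) (hη : η = K * ψ₁ - (ψ₁ * dmax + Rmax)) :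
    0 < η ∧
    (∀ t ∈ Ici (0 : ℝ), s t ≠ 0 → deriv (fun τ => |s τ|) t ≤ -η) ∧
    (∀ t, |s 0| / η ≤ t → s t = 0) := by
  have hη0 : 0 < η := by
    have := (div_lt_iff₀ hψ₁).mp hK
    rw [hη]; linarith
  -- derivative bounds off the manifold
  have hup : ∀ t ∈ Ici (0 : ℝ), 0 < s t → s' t ≤ -η := by
    intro t ht hpos
    rw [heq t ht hpos.ne', Real.sign_of_pos hpos]
    have h1 := (abs_le.mp (hd t)).2
    have h2 := (abs_le.mp (hR t)).2
    have h3 : ψ₁ * d t ≤ ψ₁ * dmax := mul_le_mul_of_nonneg_left h1 hψ₁.le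
    rw [hη]; linarith
  have hdn : ∀ t ∈ Ici (0 : ℝ), s t < 0 → η ≤ s' t := by
    intro t ht hneg
    rw [heq t ht hneg.ne, Real.sign_of_neg hneg]
    have h1 := (abs_le.mp (hd t)).1
    have h2 := (abs_le.mp (hR t)).1
    have h3 : ψ₁ * (-dmax) ≤ ψ₁ * d t := mul_le_mul_of_nonneg_left h1 hψ₁.le
    rw [hη]; nlinarith
  have hderivN : ∀ t ∈ Ici (0 : ℝ), HasDerivAt (fun τ => -s τ) (-(s' t)) t :=
    fun t ht => (hderiv t ht).neg
  have hupN : ∀ t ∈ Ici (0 : ℝ), 0 < -s t → -(s' t) ≤ -η := by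
    intro t ht hp
    have := hdn t ht (by linarith)
    linarith
  -- once zero, stays zero
  have hstays : ∀ t₀, 0 ≤ t₀ → s t₀ = 0 → ∀ t, t₀ ≤ t → s t = 0 := by
    intro t₀ ht₀ hz t ht
    rcases eq_or_lt_of_le ht with rfl | hlt
    · exact hz
    rcases lt_trichotomy (s t) 0 with hneg | h0 | hpos
    · exfalso
      exact sm_no_return (fun τ => -s τ) (fun τ => -(s' τ)) η hη0 hderivN hupN t₀ t ht₀
        (by simp [hz]) hlt (show (0:ℝ) < -s t by linarith)
    · exact h0
    · exact absurd hpos (sm_no_return s s' η hη0 hderiv hup t₀ t ht₀ hz hlt)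
  refine ⟨hη0, ?_, ?_⟩
  · -- derivative of |s| off the manifold
    intro t ht hne
    rcases hne.lt_or_gt with hneg | hpos
    · have hev : ∀ᶠ τ in nhds t, s τ < 0 :=
        (hderiv t ht).continuousAt.eventually_lt_const hneg
      have hev' : (fun τ => |s τ|) =ᶠ[nhds t] fun τ => -s τ :=
        hev.mono fun τ hτ => abs_of_neg hτ
      have hD : HasDerivAt (fun τ => |s τ|) (-(s' t)) t :=
        (hderiv t ht).neg.congr_of_eventuallyEq hev'
      rw [hD.deriv]
      have := hdn t ht hneg
      linarith
    · have hev : ∀ᶠ τ in nhds t, 0 < s τ :=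
        (hderiv t ht).continuousAt.eventually_const_lt hpos
      have hev' : (fun τ => |s τ|) =ᶠ[nhds t] s :=
        hev.mono fun τ hτ => abs_of_pos hτ
      have hD : HasDerivAt (fun τ => |s τ|) (s' t) t :=
        (hderiv t ht).congr_of_eventuallyEq hev'
      rw [hD.deriv]
      exact hup t ht hpos
  · -- reaching the manifold
    intro t hT
    have hT0 : (0:ℝ) ≤ |s 0| / η := div_nonneg (abs_nonneg _) hη0.le
    rcases lt_trichotomy (s 0) 0 with hneg | h0 | hpos
    · obtain ⟨t₁, ht₁, hz₁⟩ := sm_reach (fun τ => -s τ) (fun τ => -(s' τ)) η hη0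
        hderivN hupN 0 (le_refl _) (show (0:ℝ) < -s 0 by linarith)
      have hz : s t₁ = 0 := by linarith
      have ht₁T : t₁ ≤ |s 0| / η := by
        have := ht₁.2
        rw [abs_of_neg hneg]
        simpa using this
      exact hstays t₁ ht₁.1 hz t (ht₁T.trans hT)
    · exact hstays 0 (le_refl _) h0 t (by simpa [h0] using hT)
    · obtain ⟨t₁, ht₁, hz⟩ := sm_reach s s' η hη0 hderiv hup 0 (le_refl _) hpos
      have ht₁T : t₁ ≤ |s 0| / η := by
        have := ht₁.2
        rw [abs_of_pos hpos]
        simpa using this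
      exact hstays t₁ ht₁.1 hz t (ht₁T.trans hT)
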